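/- Let A be an m × m matrix, ρ ∈ ℝ^m with ∑_s ρ_s = 1, and suppose there exist β > 0 and γ ∈ (0,1) such that |(A^k)_{is} − ρ_s| ≤ β γ^k for all i, s and all k ≥ 0. Suppose x_i^{k+1} = ∑_s A_{is} x_s^k + ε_i^k with x̄^k := ∑_s ρ_s x_s^k satisfying x̄^{k+1} = x̄^k + ∑_i ρ_i ε_i^k, and that 0 ≤ ρ_s ≤ 1 for all s. Then for all k ≥ 2 and all i, ‖x_i^k − x̄^k‖ ≤ β γ^k ∑_s ‖x_s^0‖ + β ∑_{r=1}^{k-1} γ^{k-r} ∑_s ‖ε_s^{r-1}‖ + ∑_s ‖ε_s^{k-1}‖. -/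
import Mathlib

theorem stmt_14 (m n : ℕ) (A : Matrix (Fin m) (Fin m) ℝ)
    (ρ : Fin m → ℝ) (hρ_sum : ∑ s, ρ s = 1) (hρ : ∀ s, 0 ≤ ρ s ∧ ρ s ≤ 1)
    (β γ : ℝ) (hβ : 0 < β) (hγ : γ ∈ Set.Ioo (0 : ℝ) 1)
    (hgeo : ∀ k : ℕ, ∀ i s, |(A ^ k) i s - ρ s| ≤ β * γ ^ k)
    (x ε : ℕ → Fin m → EuclideanSpace ℝ (Fin n))
    (hrec : ∀ k i, x (k + 1) i = (∑ s, A i s • x k s) + ε k i)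
    (hbar : ∀ k, ∑ s, ρ s • x (k + 1) s =
        (∑ s, ρ s • x k s) + ∑ i, ρ i • ε k i) :
    ∀ k : ℕ, 2 ≤ k → ∀ i,
      ‖x k i - ∑ s, ρ s • x k s‖ ≤
        β * γ ^ k * (∑ s, ‖x 0 s‖) +
        β * ∑ r ∈ Finset.Icc 1 (k - 1), γ ^ (k - r) * ∑ s, ‖ε (r - 1) s‖ +
        ∑ s, ‖ε (k - 1) s‖ := by
  obtain ⟨hγ0, hγ1⟩ := hγ
  -- unrolled recursion
  have hx : ∀ k i, x k i = (∑ s, (A ^ k) i s • x 0 s)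
      + ∑ r ∈ Finset.range k, ∑ s, (A ^ (k - 1 - r)) i s • ε r s := by
    intro k
    induction k with
    | zero => intro i; simp [Matrix.one_apply]
    | succ k ih =>
      intro i
      rw [hrec]
      have e1 : ∀ s : Fin m, A i s • x k s
          = (∑ t, (A i s * (A ^ k) s t) • x 0 t)
            + ∑ r ∈ Finset.range k, ∑ t, (A i s * (A ^ (k - 1 - r)) s t) • ε r t := by
        intro s
        rw [ih s]
        simp [smul_add, Finset.smul_sum, mul_smul]
      rw [Finset.sum_congr rfl fun s _ => e1 s, Finset.sum_add_distrib,
        Finset.sum_range_succ]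
      have e2 : (∑ s, ∑ t, (A i s * (A ^ k) s t) • x 0 t)
          = ∑ t, (A ^ (k + 1)) i t • x 0 t := by
        rw [Finset.sum_comm]
        refine Finset.sum_congr rfl fun t _ => ?_
        rw [← Finset.sum_smul, pow_succ', Matrix.mul_apply]
      have e3 : (∑ s, ∑ r ∈ Finset.range k, ∑ t, (A i s * (A ^ (k - 1 - r)) s t) • ε r t)
          = ∑ r ∈ Finset.range k, ∑ t, (A ^ (k + 1 - 1 - r)) i t • ε r t := by
        rw [Finset.sum_comm]
        refine Finset.sum_congr rfl fun r hr => ?_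
        rw [Finset.sum_comm]
        refine Finset.sum_congr rfl fun t _ => ?_
        rw [← Finset.sum_smul]
        congr 1
        have hrk : k - 1 - r + 1 = k + 1 - 1 - r := by
          simp only [Finset.mem_range] at hr; omega
        rw [← hrk, pow_succ', Matrix.mul_apply]
      have e4 : (∑ t, (A ^ (k + 1 - 1 - k)) i t • ε k t) = ε k i := by
        simp [Matrix.one_apply]
      rw [e2, e3, e4]
      abel
  -- unrolled average
  have hS : ∀ k, (∑ s, ρ s • x k s) = (∑ s, ρ s • x 0 s)
      + ∑ r ∈ Finset.range k, ∑ s, ρ s • ε r s := by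
    intro k
    induction k with
    | zero => simp
    | succ k ih => rw [hbar, ih, Finset.sum_range_succ]; abel
  -- difference formula
  have hdiff : ∀ k i, x k i - (∑ s, ρ s • x k s)
      = (∑ s, ((A ^ k) i s - ρ s) • x 0 s)
        + ∑ r ∈ Finset.range k, ∑ s, ((A ^ (k - 1 - r)) i s - ρ s) • ε r s := by
    intro k i
    rw [hx k i, hS k]
    simp only [sub_smul, Finset.sum_sub_distrib]
    abel
  intro k hk i
  rw [hdiff k i]
  have hnorm : ∀ (c : Fin m → ℝ) (v : Fin m → EuclideanSpace ℝ (Fin n)) (b : ℝ),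
      (∀ s, |c s| ≤ b) → ‖∑ s, c s • v s‖ ≤ b * ∑ s, ‖v s‖ := by
    intro c v b hb
    calc ‖∑ s, c s • v s‖ ≤ ∑ s, ‖c s • v s‖ := norm_sum_le _ _
      _ ≤ ∑ s, b * ‖v s‖ := by
          refine Finset.sum_le_sum fun s _ => ?_
          rw [norm_smul, Real.norm_eq_abs]
          exact mul_le_mul_of_nonneg_right (hb s) (norm_nonneg _)
      _ = b * ∑ s, ‖v s‖ := by rw [Finset.mul_sum]
  obtain ⟨k', rfl⟩ : ∃ k', k = k' + 1 := ⟨k - 1, by omega⟩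
  rw [Finset.sum_range_succ]
  simp only [Nat.add_sub_cancel, Nat.sub_self, pow_zero]
  have h1 : ‖∑ s, ((A ^ (k' + 1)) i s - ρ s) • x 0 s‖ ≤ β * γ ^ (k' + 1) * ∑ s, ‖x 0 s‖ :=
    hnorm _ _ _ (fun s => hgeo (k' + 1) i s)
  have h2 : ∀ r ∈ Finset.range k',
      ‖∑ s, ((A ^ (k' - r)) i s - ρ s) • ε r s‖
        ≤ β * (γ ^ (k' - r) * ∑ s, ‖ε r s‖) := by
    intro r _
    rw [← mul_assoc]
    exact hnorm _ _ _ (fun s => hgeo (k' - r) i s)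
  have h3 : ‖∑ s, ((1 : Matrix (Fin m) (Fin m) ℝ) i s - ρ s) • ε k' s‖ ≤ ∑ s, ‖ε k' s‖ := by
    have := hnorm (fun s => (1 : Matrix (Fin m) (Fin m) ℝ) i s - ρ s) (ε k') 1 ?_
    · simpa using this
    · intro s
      show |(1 : Matrix (Fin m) (Fin m) ℝ) i s - ρ s| ≤ 1
      rw [Matrix.one_apply, abs_le]
      constructor <;> split_ifs <;> linarith [(hρ s).1, (hρ s).2]
  have hre : (∑ r ∈ Finset.Icc 1 k', γ ^ (k' + 1 - r) * ∑ s, ‖ε (r - 1) s‖)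
      = ∑ r ∈ Finset.range k', γ ^ (k' - r) * ∑ s, ‖ε r s‖ := by
    rw [← Finset.Ico_add_one_right_eq_Icc, Finset.sum_Ico_eq_sum_range]
    refine Finset.sum_congr (by simp) fun r hr => ?_
    simp only [Finset.mem_range] at hr
    have e1 : k' + 1 - (1 + r) = k' - r := by omega
    have e2 : 1 + r - 1 = r := by omega
    rw [e1, e2]
  calc ‖(∑ s, ((A ^ (k' + 1)) i s - ρ s) • x 0 s)
        + ((∑ r ∈ Finset.range k', ∑ s, ((A ^ (k' - r)) i s - ρ s) • ε r s)
          + ∑ s, ((1 : Matrix (Fin m) (Fin m) ℝ) i s - ρ s) • ε k' s)‖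
      ≤ ‖∑ s, ((A ^ (k' + 1)) i s - ρ s) • x 0 s‖
        + (‖∑ r ∈ Finset.range k', ∑ s, ((A ^ (k' - r)) i s - ρ s) • ε r s‖
          + ‖∑ s, ((1 : Matrix (Fin m) (Fin m) ℝ) i s - ρ s) • ε k' s‖) := by
        refine le_trans (norm_add_le _ _) ?_
        gcongr
        exact norm_add_le _ _
    _ ≤ β * γ ^ (k' + 1) * (∑ s, ‖x 0 s‖)
        + ((∑ r ∈ Finset.range k', β * (γ ^ (k' - r) * ∑ s, ‖ε r s‖))
          + ∑ s, ‖ε k' s‖) :=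
        add_le_add h1 (add_le_add
          (le_trans (norm_sum_le _ _) (Finset.sum_le_sum h2)) h3)
    _ = β * γ ^ (k' + 1) * (∑ s, ‖x 0 s‖)
        + β * (∑ r ∈ Finset.Icc 1 k', γ ^ (k' + 1 - r) * ∑ s, ‖ε (r - 1) s‖)
        + ∑ s, ‖ε k' s‖ := by
        rw [hre]
        rw [show β * ∑ r ∈ Finset.range k', γ ^ (k' - r) * ∑ s, ‖ε r s‖
            = ∑ r ∈ Finset.range k', β * (γ ^ (k' - r) * ∑ s, ‖ε r s‖) from
          Finset.mul_sum _ _ _]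
        ring
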